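/- Suppose p_X(x) = p_Y(y) for every pair (x,y) with p_{XY}(x,y) > 0. Then there exists an auxiliary random variable U that is independent of X, independent of Y, and satisfies H(X|Y,U) = 0 and H(Y|X,U) = 0; consequently G_PPI(X;Y) = H(Y|X). -/

import Mathlib

open scoped BigOperators Pointwise Classical

noncomputable section

namespace GW

/-- A probability mass function on a finite type. -/
def IsPMF {α : Type} [Fintype α] (p : α → ℝ) : Prop :=
  (∀ a, 0 ≤ p a) ∧ ∑ a, p a = 1

/-- Distribution (pmf) of the random variable `f` under the pmf `p`. -/
def dist {α β : Type} [Fintype α] (p : α → ℝ) (f : α → β) : β → ℝ :=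
  fun b => ∑ a, if f a = b then p a else 0

/-- Shannon entropy (base 2) of the random variable `f` under the pmf `p`. -/
def H {α β : Type} [Fintype α] [Fintype β] (p : α → ℝ) (f : α → β) : ℝ :=
  ∑ b, -(dist p f b * Real.logb 2 (dist p f b))

/-- Mutual information `I(f; g)` under `p`. -/
def I2 {α β γ : Type} [Fintype α] [Fintype β] [Fintype γ]
    (p : α → ℝ) (f : α → β) (g : α → γ) : ℝ :=
  H p f + H p g - H p (fun a => (f a, g a))

/-- Conditional entropy `H(f | g)` under `p`. -/
def Hc {α β γ : Type} [Fintype α] [Fintype β] [Fintype γ]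
    (p : α → ℝ) (f : α → β) (g : α → γ) : ℝ :=
  H p (fun a => (f a, g a)) - H p g

/-- Conditional mutual information `I(f; g | h)` under `p`. -/
def Ic {α β γ δ : Type} [Fintype α] [Fintype β] [Fintype γ] [Fintype δ]
    (p : α → ℝ) (f : α → β) (g : α → γ) (h : α → δ) : ℝ :=
  Hc p f h + Hc p g h - Hc p (fun a => (f a, g a)) h

/-- Independence of the random variables `f` and `g` under `p`. -/
def Indep {α β γ : Type} [Fintype α] (p : α → ℝ) (f : α → β) (g : α → γ) : Prop :=
  ∀ b c, dist p (fun a => (f a, g a)) (b, c) = dist p f b * dist p g c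

/-- `q` is a joint pmf on `X × Y × U` whose `(X,Y)`-marginal is `p`; i.e. `U` is an
auxiliary random variable defined jointly with `(X,Y)` via a conditional pmf `p_{U|XY}`. -/
def IsAux {X Y U : Type} [Fintype X] [Fintype Y] [Fintype U]
    (p : X × Y → ℝ) (q : X × Y × U → ℝ) : Prop :=
  IsPMF q ∧ ∀ x y, (∑ u, q (x, y, u)) = p (x, y)

/-- Coordinate map onto `X`. -/
def cX {X Y U : Type} : X × Y × U → X := fun a => a.1
/-- Coordinate map onto `Y`. -/
def cY {X Y U : Type} : X × Y × U → Y := fun a => a.2.1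
/-- Coordinate map onto `U`. -/
def cU {X Y U : Type} : X × Y × U → U := fun a => a.2.2
/-- Coordinate map onto `X × Y`. -/
def cXY {X Y U : Type} : X × Y × U → X × Y := fun a => (a.1, a.2.1)

/-- The mutual information region `𝓘_{XY}`. -/
def MIRegion {X Y : Type} [Fintype X] [Fintype Y] (p : X × Y → ℝ) : Set (ℝ × ℝ × ℝ) :=
  { v | ∃ (U : Type) (_ : Fintype U) (q : X × Y × U → ℝ), IsAux p q ∧
      v = (I2 q cX cU, I2 q cY cU, I2 q cXY cU) }

/-- The outer region `𝓘ᵒ_{XY}`. -/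
def OuterRegion {X Y : Type} [Fintype X] [Fintype Y] (p : X × Y → ℝ) : Set (ℝ × ℝ × ℝ) :=
  { v | 0 ≤ v.1 ∧ 0 ≤ v.2.1 ∧ v.1 + v.2.1 - v.2.2 ≤ I2 p Prod.fst Prod.snd ∧
        0 ≤ v.2.2 - v.2.1 ∧ v.2.2 - v.2.1 ≤ Hc p Prod.fst Prod.snd ∧
        0 ≤ v.2.2 - v.1 ∧ v.2.2 - v.1 ≤ Hc p Prod.snd Prod.fst }

/-- Maximal interaction information `G_NNI(X; Y)`. -/
def GNNI {X Y : Type} [Fintype X] [Fintype Y] (p : X × Y → ℝ) : ℝ :=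
  sSup { r | ∃ (U : Type) (_ : Fintype U) (q : X × Y × U → ℝ), IsAux p q ∧
      r = Ic q cX cY cU - I2 p Prod.fst Prod.snd }

/-- Asymmetric private interaction information `G_PNI(X → Y)`. -/
def GPNI {X Y : Type} [Fintype X] [Fintype Y] (p : X × Y → ℝ) : ℝ :=
  sSup { r | ∃ (U : Type) (_ : Fintype U) (q : X × Y × U → ℝ), IsAux p q ∧
      Indep q cU cX ∧ r = Ic q cX cY cU - I2 p Prod.fst Prod.snd }

/-- Symmetric private interaction information `G_PPI(X; Y)`. -/
def GPPI {X Y : Type} [Fintype X] [Fintype Y] (p : X × Y → ℝ) : ℝ :=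
  sSup { r | ∃ (U : Type) (_ : Fintype U) (q : X × Y × U → ℝ), IsAux p q ∧
      Indep q cU cX ∧ Indep q cU cY ∧ r = Ic q cX cY cU - I2 p Prod.fst Prod.snd }

/-!
Let `M` be the transition matrix of the random walk on the bipartite support graph of `p` with
vertex set `X ⊕ Y`: from `x` it moves to `y` with probability `p(y|x)`, from `y` to `x` with
probability `p(x|y)`, and isolated vertices carry a self-loop. The hypothesis `p_X(x) = p_Y(y)` on
the support makes `M` symmetric, hence doubly stochastic, so by Birkhoff's theorem
`M = ∑ w_σ P_σ` is a mixture of permutation matrices, and every `σ` with `w_σ > 0` maps each `x`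
with `p_X(x) > 0` to a neighbour `y`. Drawing `U = σ ~ w` independently of `X ~ p_X` and setting
`Y = σ(X)` gives `(X, Y) ~ p`, with `U` independent of `X` and of `Y`, and `X`, `Y` determining
each other given `U`.

Conversely, for any `U` independent of `Y`, `I(X;Y|U) = H(Y) - H(Y|X,U) ≤ H(Y)`, so
`G_PPI(X;Y) ≤ H(Y) - I(X;Y) = H(Y|X)`, with equality for the `U` above.
-/

section Distribution

variable {α β γ : Type} [Fintype α]

lemma dist_nonneg {p : α → ℝ} (hp : ∀ a, 0 ≤ p a) (f : α → β) (b : β) : 0 ≤ dist p f b :=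
  Finset.sum_nonneg fun a _ => by split_ifs <;> simp [hp a]

lemma sum_dist [Fintype β] (p : α → ℝ) (f : α → β) : ∑ b, dist p f b = ∑ a, p a := by
  simp only [dist]
  rw [Finset.sum_comm]
  simp

lemma dist_comp [Fintype β] (p : α → ℝ) (f : α → β) (g : β → γ) :
    dist p (fun a => g (f a)) = dist (dist p f) g := by
  ext c
  unfold dist
  simp only [Finset.ite_sum_zero]
  rw [Finset.sum_comm]
  refine Finset.sum_congr rfl fun a _ => ?_
  rw [Finset.sum_eq_single (f a) (fun b _ hb => by simp [Ne.symm hb]) (by simp)]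
  simp

lemma dist_congr {p : α → ℝ} {f f' : α → β} (h : ∀ a, p a ≠ 0 → f a = f' a) :
    dist p f = dist p f' := by
  ext b
  refine Finset.sum_congr rfl fun a _ => ?_
  by_cases ha : p a = 0
  · simp [ha]
  · rw [h a ha]

lemma dist_fst_apply [Fintype β] [Fintype γ] (p : β × γ → ℝ) (b : β) :
    dist p Prod.fst b = ∑ c, p (b, c) := by
  simp only [dist, Fintype.sum_prod_type]
  rw [Finset.sum_comm]
  simp

lemma dist_snd_apply [Fintype β] [Fintype γ] (p : β × γ → ℝ) (c : γ) :
    dist p Prod.snd c = ∑ b, p (b, c) := by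
  simp [dist, Fintype.sum_prod_type]

lemma dist_eq_sum_dist_pair [Fintype β] [Fintype γ] (p : α → ℝ) (f : α → β) (g : α → γ)
    (b : β) : dist p f b = ∑ c, dist p (fun a => (f a, g a)) (b, c) := by
  rw [show dist p f b = dist p (fun a => (f a, g a).1) b from rfl, dist_comp, dist_fst_apply]

lemma dist_eq_sum_dist_pair' [Fintype β] [Fintype γ] (p : α → ℝ) (f : α → β) (g : α → γ)
    (c : γ) : dist p g c = ∑ b, dist p (fun a => (f a, g a)) (b, c) := by
  rw [show dist p g c = dist p (fun a => (f a, g a).2) c from rfl, dist_comp, dist_snd_apply]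

lemma indep_of_dist_pair_eq_mul [Fintype β] [Fintype γ] {p : α → ℝ} {f : α → β} {g : α → γ}
    {μ : β → ℝ} {ν : γ → ℝ} (h : ∀ b c, dist p (fun a => (f a, g a)) (b, c) = μ b * ν c)
    (hμ : ∑ b, μ b = 1) (hν : ∑ c, ν c = 1) : Indep p f g := by
  intro b c
  simp only [h, dist_eq_sum_dist_pair p f g b, dist_eq_sum_dist_pair' p f g c, ← Finset.mul_sum,
    ← Finset.sum_mul, hμ, hν, mul_one, one_mul]

end Distribution

section Entropy

variable {α β γ δ : Type} [Fintype α] [Fintype β] [Fintype γ] [Fintype δ]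

lemma H_comp (p : α → ℝ) (f : α → β) (g : β → γ) :
    H p (fun a => g (f a)) = H (dist p f) g := by
  simp only [H, dist_comp]

lemma H_comp_of_injective (p : α → ℝ) (f : α → β) {g : β → γ} (hg : g.Injective) :
    H p (fun a => g (f a)) = H p f := by
  have hdist : ∀ b, dist (dist p f) g (g b) = dist p f b := fun b => by
    simp [dist, hg.eq_iff]
  rw [H_comp, H, H]
  refine (Fintype.sum_of_injective g hg _ _ (fun c hc => ?_) fun b => by rw [hdist]).symm
  have : dist (dist p f) g c = 0 :=
    Finset.sum_eq_zero fun b _ => if_neg fun h => hc ⟨b, h⟩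
  simp [this]

lemma H_swap (p : α → ℝ) (f : α → β) (g : α → γ) :
    H p (fun a => (g a, f a)) = H p (fun a => (f a, g a)) :=
  H_comp_of_injective p (fun a => (f a, g a)) Prod.swap_injective

lemma neg_mul_logb_mul (s t : ℝ) :
    -(s * t * Real.logb 2 (s * t)) = t * -(s * Real.logb 2 s) + s * -(t * Real.logb 2 t) := by
  have h := Real.negMulLog_mul s t
  simp only [Real.negMulLog, Real.logb] at h ⊢
  field_simp
  linarith

lemma neg_sum_mul_logb_sum_le {d : β → ℝ} (hd : ∀ b, 0 ≤ d b) :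
    -((∑ b, d b) * Real.logb 2 (∑ b, d b)) ≤ ∑ b, -(d b * Real.logb 2 (d b)) := by
  rw [Finset.sum_mul, ← Finset.sum_neg_distrib]
  refine Finset.sum_le_sum fun b _ => ?_
  rcases (hd b).eq_or_lt with h0 | h0
  · simp [← h0]
  · have := Real.logb_le_logb_of_le one_lt_two h0
      (Finset.single_le_sum (fun b' _ => hd b') (Finset.mem_univ b))
    nlinarith

lemma H_le_H_pair {p : α → ℝ} (hp : ∀ a, 0 ≤ p a) (f : α → β) (h : α → γ) :
    H p h ≤ H p (fun a => (f a, h a)) := by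
  rw [← H_swap, H, H, Fintype.sum_prod_type]
  refine Finset.sum_le_sum fun c _ => ?_
  rw [dist_eq_sum_dist_pair p h f c]
  exact neg_sum_mul_logb_sum_le fun b => dist_nonneg hp _ _

lemma Hc_nonneg {p : α → ℝ} (hp : ∀ a, 0 ≤ p a) (f : α → β) (h : α → γ) : 0 ≤ Hc p f h :=
  sub_nonneg.2 (H_le_H_pair hp f h)

lemma Hc_eq_zero_of_eq_comp {p : α → ℝ} {f : α → β} {h : α → γ} {g : γ → β}
    (hfg : ∀ a, p a ≠ 0 → f a = g (h a)) : Hc p f h = 0 := by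
  have hsupp : dist p (fun a => (f a, h a)) = dist p (fun a => (g (h a), h a)) :=
    dist_congr fun a ha => by rw [hfg a ha]
  have hinj : (fun c => (g c, c)).Injective := fun c c' hc => (Prod.ext_iff.1 hc).2
  rw [Hc, sub_eq_zero, H, hsupp, ← H, H_comp_of_injective p h hinj]

lemma H_pair_of_indep {p : α → ℝ} (hp : IsPMF p) {f : α → β} {g : α → γ} (h : Indep p f g) :
    H p (fun a => (f a, g a)) = H p f + H p g := by
  have hf : ∑ b, dist p f b = 1 := by rw [sum_dist, hp.2]
  have hg : ∑ c, dist p g c = 1 := by rw [sum_dist, hp.2]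
  rw [Indep] at h
  simp only [H, Fintype.sum_prod_type, h, neg_mul_logb_mul, Finset.sum_add_distrib,
    ← Finset.sum_mul, ← Finset.mul_sum, hf, hg, one_mul]

lemma Hc_eq_H_sub_I2 (p : α → ℝ) (f : α → β) (g : α → γ) : Hc p g f = H p g - I2 p f g := by
  rw [Hc, I2, H_swap]
  ring

lemma Ic_eq_H_sub_Hc_of_indep {p : α → ℝ} (hp : IsPMF p) (f : α → β) {g : α → γ} {h : α → δ}
    (hind : Indep p h g) : Ic p f g h = H p g - Hc p g (fun a => (f a, h a)) := by
  have hregroup : H p (fun a => ((f a, g a), h a)) = H p (fun a => (g a, f a, h a)) :=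
    H_comp_of_injective p (fun a => (g a, f a, h a))
      (g := fun t => ((t.2.1, t.1), t.2.2)) fun s t hst => by aesop
  have hgh : H p (fun a => (g a, h a)) = H p g + H p h := by
    rw [← H_swap, H_pair_of_indep hp hind, add_comm]
  simp only [Ic, Hc, hregroup, hgh]
  ring

end Entropy

section Birkhoff

variable {n : Type} [Fintype n] [DecidableEq n] {M : Matrix n n ℝ} {w : Equiv.Perm n → ℝ}

lemma apply_eq_sum_of_eq_sum_permMatrix (hM : ∑ σ, w σ • σ.permMatrix ℝ = M) (i j : n) :
    M i j = ∑ σ, if σ i = j then w σ else 0 := by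
  simp [← hM, Matrix.sum_apply, Equiv.Perm.permMatrix, PEquiv.toMatrix_apply,
    Equiv.toPEquiv_apply, eq_comm]

lemma le_apply_of_eq_sum_permMatrix (hw : ∀ σ, 0 ≤ w σ)
    (hM : ∑ σ, w σ • σ.permMatrix ℝ = M) (σ : Equiv.Perm n) (i : n) : w σ ≤ M i (σ i) := by
  rw [apply_eq_sum_of_eq_sum_permMatrix hM]
  simpa using Finset.single_le_sum (f := fun τ : Equiv.Perm n => if τ i = σ i then w τ else 0)
    (fun τ _ => by split_ifs <;> simp [hw τ]) (Finset.mem_univ σ)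

end Birkhoff

section WalkMatrix

open scoped Matrix

variable {X Y : Type} [Fintype X] [Fintype Y]

/-- The diagonal entry `1 - d / d` is `1` at an isolated vertex (`d = 0`, as `0 / 0 = 0`) and `0`
elsewhere. -/
def walkMatrix (p : X × Y → ℝ) : Matrix (X ⊕ Y) (X ⊕ Y) ℝ :=
  Matrix.fromBlocks (Matrix.diagonal fun x => 1 - dist p Prod.fst x / dist p Prod.fst x)
    (Matrix.of fun x y => p (x, y) / dist p Prod.fst x)
    (Matrix.of fun y x => p (x, y) / dist p Prod.snd y)
    (Matrix.diagonal fun y => 1 - dist p Prod.snd y / dist p Prod.snd y)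

lemma walkMatrix_nonneg {p : X × Y → ℝ} (hp : ∀ a, 0 ≤ p a) (i j : X ⊕ Y) :
    0 ≤ walkMatrix p i j := by
  have hdiag : ∀ t : ℝ, 0 ≤ 1 - t / t := fun t => sub_nonneg.2 (div_self_le_one t)
  rcases i with x | y <;> rcases j with x' | y' <;>
    simp only [walkMatrix, Matrix.fromBlocks_apply₁₁, Matrix.fromBlocks_apply₁₂,
      Matrix.fromBlocks_apply₂₁, Matrix.fromBlocks_apply₂₂, Matrix.diagonal_apply, Matrix.of_apply]
  · split_ifs <;> simp [hdiag]
  · exact div_nonneg (hp _) (dist_nonneg hp _ _)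
  · exact div_nonneg (hp _) (dist_nonneg hp _ _)
  · split_ifs <;> simp [hdiag]

lemma walkMatrix_row_sum (p : X × Y → ℝ) (i : X ⊕ Y) : ∑ j, walkMatrix p i j = 1 := by
  rcases i with x | y <;>
    simp [walkMatrix, Fintype.sum_sum_type, Matrix.diagonal_apply, ← Finset.sum_div,
      ← dist_fst_apply, ← dist_snd_apply]

lemma walkMatrix_transpose {p : X × Y → ℝ} (hp : ∀ a, 0 ≤ p a)
    (hmarg : ∀ x y, 0 < p (x, y) → dist p Prod.fst x = dist p Prod.snd y) :
    (walkMatrix p)ᵀ = walkMatrix p := by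
  have hcond : ∀ x y, p (x, y) / dist p Prod.snd y = p (x, y) / dist p Prod.fst x := by
    intro x y
    rcases (hp (x, y)).eq_or_lt with h0 | hpos
    · simp [← h0]
    · rw [hmarg x y hpos]
  simp only [walkMatrix, Matrix.fromBlocks_transpose, Matrix.diagonal_transpose]
  congr 1 <;> ext <;> simp [hcond]

lemma walkMatrix_mem_doublyStochastic {p : X × Y → ℝ} (hp : ∀ a, 0 ≤ p a)
    (hmarg : ∀ x y, 0 < p (x, y) → dist p Prod.fst x = dist p Prod.snd y) :
    walkMatrix p ∈ doublyStochastic ℝ (X ⊕ Y) := by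
  refine mem_doublyStochastic_iff_sum.2 ⟨walkMatrix_nonneg hp, walkMatrix_row_sum p, fun j => ?_⟩
  rw [← walkMatrix_transpose hp hmarg]
  exact walkMatrix_row_sum p j

end WalkMatrix

section MatchingCoupling

variable {X Y : Type} [Fintype X] [Fintype Y] {p : X × Y → ℝ} {w : Equiv.Perm (X ⊕ Y) → ℝ}

def matchingCoupling (p : X × Y → ℝ) (w : Equiv.Perm (X ⊕ Y) → ℝ) :
    X × Y × Equiv.Perm (X ⊕ Y) → ℝ :=
  fun a => if a.2.2 (Sum.inl a.1) = Sum.inr a.2.1 then w a.2.2 * dist p Prod.fst a.1 else 0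

lemma matchingCoupling_nonneg (hp : ∀ a, 0 ≤ p a) (hw : ∀ σ, 0 ≤ w σ)
    (a : X × Y × Equiv.Perm (X ⊕ Y)) :
    0 ≤ matchingCoupling p w a := by
  unfold matchingCoupling
  split_ifs
  exacts [mul_nonneg (hw _) (dist_nonneg hp _ _), le_rfl]

lemma walkMatrix_apply_perm_pos (hw : ∀ σ, 0 ≤ w σ)
    (hM : ∑ σ, w σ • σ.permMatrix ℝ = walkMatrix p) {σ : Equiv.Perm (X ⊕ Y)} (hσ : w σ ≠ 0)
    (i : X ⊕ Y) : 0 < walkMatrix p i (σ i) :=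
  ((hw σ).lt_of_ne' hσ).trans_le (le_apply_of_eq_sum_permMatrix hw hM σ i)

lemma exists_perm_inl_eq_inr (hw : ∀ σ, 0 ≤ w σ)
    (hM : ∑ σ, w σ • σ.permMatrix ℝ = walkMatrix p) {σ : Equiv.Perm (X ⊕ Y)} (hσ : w σ ≠ 0)
    {x : X} (hx : dist p Prod.fst x ≠ 0) : ∃ y, σ (Sum.inl x) = Sum.inr y := by
  have hpos := walkMatrix_apply_perm_pos hw hM hσ (Sum.inl x)
  rcases hσx : σ (Sum.inl x) with x' | y
  · rw [hσx] at hpos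
    by_cases h : x = x'
    · subst h
      simp [walkMatrix, div_self hx] at hpos
    · simp [walkMatrix, h] at hpos
  · exact ⟨y, rfl⟩

lemma exists_perm_inl_eq_inr_of_snd (hw : ∀ σ, 0 ≤ w σ)
    (hM : ∑ σ, w σ • σ.permMatrix ℝ = walkMatrix p) {σ : Equiv.Perm (X ⊕ Y)} (hσ : w σ ≠ 0)
    {y : Y} (hy : dist p Prod.snd y ≠ 0) : ∃ x, σ (Sum.inl x) = Sum.inr y := by
  have hpos := walkMatrix_apply_perm_pos hw hM hσ (σ.symm (Sum.inr y))
  rw [Equiv.apply_symm_apply] at hpos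
  rcases hσy : σ.symm (Sum.inr y) with x | y'
  · exact ⟨x, by rw [← hσy, Equiv.apply_symm_apply]⟩
  · rw [hσy] at hpos
    by_cases h : y' = y
    · subst h
      simp [walkMatrix, div_self hy] at hpos
    · simp [walkMatrix, h] at hpos

lemma dist_fst_eq_dist_snd_of_perm (hp : ∀ a, 0 ≤ p a)
    (hmarg : ∀ x y, 0 < p (x, y) → dist p Prod.fst x = dist p Prod.snd y)
    (hw : ∀ σ, 0 ≤ w σ) (hM : ∑ σ, w σ • σ.permMatrix ℝ = walkMatrix p)
    {σ : Equiv.Perm (X ⊕ Y)} (hσ : w σ ≠ 0) {x : X} {y : Y} (hxy : σ (Sum.inl x) = Sum.inr y) :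
    dist p Prod.fst x = dist p Prod.snd y := by
  have hpos := walkMatrix_apply_perm_pos hw hM hσ (Sum.inl x)
  rw [hxy] at hpos
  rcases (hp (x, y)).eq_or_lt with h0 | h0
  · simp [walkMatrix, ← h0] at hpos
  · exact hmarg x y h0

lemma matchingCoupling_apply_eq_snd (hp : ∀ a, 0 ≤ p a)
    (hmarg : ∀ x y, 0 < p (x, y) → dist p Prod.fst x = dist p Prod.snd y)
    (hw : ∀ σ, 0 ≤ w σ) (hM : ∑ σ, w σ • σ.permMatrix ℝ = walkMatrix p)
    (x : X) (y : Y) (σ : Equiv.Perm (X ⊕ Y)) :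
    matchingCoupling p w (x, y, σ) =
      if σ (Sum.inl x) = Sum.inr y then w σ * dist p Prod.snd y else 0 := by
  by_cases hσ : w σ = 0
  · simp [matchingCoupling, hσ]
  simp only [matchingCoupling]
  split_ifs with hxy
  · rw [dist_fst_eq_dist_snd_of_perm hp hmarg hw hM hσ hxy]
  · rfl

lemma sum_matchingCoupling_perm (hp : ∀ a, 0 ≤ p a)
    (hM : ∑ σ, w σ • σ.permMatrix ℝ = walkMatrix p) (x : X) (y : Y) :
    ∑ σ, matchingCoupling p w (x, y, σ) = p (x, y) := by
  have hsupp : dist p Prod.fst x = 0 → p (x, y) = 0 := fun hx => by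
    refine le_antisymm ?_ (hp (x, y))
    rw [← hx, dist_fst_apply]
    exact Finset.single_le_sum (fun y' _ => hp (x, y')) (Finset.mem_univ y)
  calc ∑ σ, matchingCoupling p w (x, y, σ)
      = (∑ σ, if σ (Sum.inl x) = Sum.inr y then w σ else 0) * dist p Prod.fst x := by
        rw [Finset.sum_mul]
        refine Finset.sum_congr rfl fun σ _ => ?_
        simp only [matchingCoupling]
        split_ifs <;> simp
    _ = p (x, y) := by
        rw [← apply_eq_sum_of_eq_sum_permMatrix hM]
        exact div_mul_cancel_of_imp hsupp

lemma sum_matchingCoupling_snd (hw : ∀ σ, 0 ≤ w σ)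
    (hM : ∑ σ, w σ • σ.permMatrix ℝ = walkMatrix p) (x : X) (σ : Equiv.Perm (X ⊕ Y)) :
    ∑ y, matchingCoupling p w (x, y, σ) = w σ * dist p Prod.fst x := by
  by_cases hσ : w σ = 0
  · simp [matchingCoupling, hσ]
  by_cases hx : dist p Prod.fst x = 0
  · simp [matchingCoupling, hx]
  obtain ⟨y₀, hy₀⟩ := exists_perm_inl_eq_inr hw hM hσ hx
  simp [matchingCoupling, hy₀]

lemma sum_matchingCoupling_fst (hp : ∀ a, 0 ≤ p a)
    (hmarg : ∀ x y, 0 < p (x, y) → dist p Prod.fst x = dist p Prod.snd y)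
    (hw : ∀ σ, 0 ≤ w σ) (hM : ∑ σ, w σ • σ.permMatrix ℝ = walkMatrix p)
    (y : Y) (σ : Equiv.Perm (X ⊕ Y)) :
    ∑ x, matchingCoupling p w (x, y, σ) = w σ * dist p Prod.snd y := by
  simp only [matchingCoupling_apply_eq_snd hp hmarg hw hM]
  by_cases hσ : w σ = 0
  · simp [hσ]
  by_cases hy : dist p Prod.snd y = 0
  · simp [hy]
  obtain ⟨x₀, hx₀⟩ := exists_perm_inl_eq_inr_of_snd hw hM hσ hy
  simp [← hx₀, σ.injective.eq_iff]

end MatchingCoupling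

section Auxiliary

variable {X Y U : Type} [Fintype X] [Fintype Y] [Fintype U] {p : X × Y → ℝ}
  {q : X × Y × U → ℝ}

lemma isAux_of_sum (hp : IsPMF p) (hq : ∀ a, 0 ≤ q a)
    (hsum : ∀ x y, ∑ u, q (x, y, u) = p (x, y)) : IsAux p q :=
  ⟨⟨hq, by simp [← hp.2, Fintype.sum_prod_type, hsum]⟩, hsum⟩

lemma dist_cU_cX_apply (q : X × Y × U → ℝ) (u : U) (x : X) :
    dist q (fun a => (cU a, cX a)) (u, x) = ∑ y, q (x, y, u) := by
  simp only [dist, cU, cX, Prod.mk.injEq, ite_and, Fintype.sum_prod_type, Finset.sum_ite_eq',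
    Finset.mem_univ, if_true]
  rw [Finset.sum_comm]
  simp

lemma dist_cU_cY_apply (q : X × Y × U → ℝ) (u : U) (y : Y) :
    dist q (fun a => (cU a, cY a)) (u, y) = ∑ x, q (x, y, u) := by
  simp [dist, cU, cY, Fintype.sum_prod_type, ite_and]

lemma dist_cXY_of_isAux (haux : IsAux p q) : dist q cXY = p := by
  ext ⟨x, y⟩
  simp only [dist, cXY, Prod.mk.injEq, ite_and, Fintype.sum_prod_type, Finset.sum_ite_irrel,
    Finset.sum_const_zero, Finset.sum_ite_eq', Finset.mem_univ, if_true, ← haux.2]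
  rw [Finset.sum_comm]
  simp

lemma H_cY_of_isAux (haux : IsAux p q) : H q cY = H p Prod.snd := by
  change H q (fun a => (cXY a).2) = _
  rw [H_comp, dist_cXY_of_isAux haux]

lemma Ic_sub_I2_eq_of_isAux (haux : IsAux p q) (hY : Indep q cU cY) :
    Ic q cX cY cU - I2 p Prod.fst Prod.snd =
      Hc p Prod.snd Prod.fst - Hc q cY (fun a => (cX a, cU a)) := by
  rw [Ic_eq_H_sub_Hc_of_indep haux.1 cX hY, H_cY_of_isAux haux, Hc_eq_H_sub_I2 p Prod.fst]
  ring

end Auxiliary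

theorem exists_isAux_indep_determined {X Y : Type} [Fintype X] [Fintype Y] {p : X × Y → ℝ}
    (hp : IsPMF p) (hmarg : ∀ x y, 0 < p (x, y) → dist p Prod.fst x = dist p Prod.snd y) :
    ∃ (U : Type) (_ : Fintype U) (q : X × Y × U → ℝ), IsAux p q ∧
      Indep q cU cX ∧ Indep q cU cY ∧
      Hc q cX (fun a => (cY a, cU a)) = 0 ∧ Hc q cY (fun a => (cX a, cU a)) = 0 := by
  obtain ⟨⟨x₀, y₀⟩⟩ : Nonempty (X × Y) := Finset.univ_nonempty_iff.1
    (Finset.nonempty_of_sum_ne_zero (by rw [hp.2]; exact one_ne_zero))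
  obtain ⟨w, hw, hw1, hM⟩ :=
    exists_eq_sum_perm_of_mem_doublyStochastic (walkMatrix_mem_doublyStochastic hp.1 hmarg)
  have hsupp : ∀ {x y σ}, matchingCoupling p w (x, y, σ) ≠ 0 → σ (Sum.inl x) = Sum.inr y :=
    fun h => by_contra fun hxy => h (if_neg hxy)
  have hX : ∑ x, dist p Prod.fst x = 1 := by rw [sum_dist, hp.2]
  have hY : ∑ y, dist p Prod.snd y = 1 := by rw [sum_dist, hp.2]
  refine ⟨Equiv.Perm (X ⊕ Y), inferInstance, matchingCoupling p w,
    isAux_of_sum hp (matchingCoupling_nonneg hp.1 hw) (sum_matchingCoupling_perm hp.1 hM),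
    indep_of_dist_pair_eq_mul (fun σ x => by rw [dist_cU_cX_apply, sum_matchingCoupling_snd hw hM])
      hw1 hX,
    indep_of_dist_pair_eq_mul
      (fun σ y => by rw [dist_cU_cY_apply, sum_matchingCoupling_fst hp.1 hmarg hw hM]) hw1 hY,
    Hc_eq_zero_of_eq_comp (g := fun b => (b.2.symm (Sum.inr b.1)).elim id fun _ => x₀) ?_,
    Hc_eq_zero_of_eq_comp (g := fun b => (b.2 (Sum.inl b.1)).elim (fun _ => y₀) id) ?_⟩
  · rintro ⟨x, y, σ⟩ h
    simp [cX, cY, cU, ← hsupp h]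
  · rintro ⟨x, y, σ⟩ h
    simp [cX, cY, cU, hsupp h]

/-- if `p_X(x) = p_Y(y)` whenever `p(x,y) > 0`, then there is an auxiliary `U`
independent of `X`, independent of `Y`, with `H(X|Y,U) = 0` and `H(Y|X,U) = 0`;
consequently `G_PPI(X;Y) = H(Y|X)`. -/
theorem stmt13 {X Y : Type} [Fintype X] [Fintype Y] (p : X × Y → ℝ) (hp : IsPMF p)
    (hmarg : ∀ x y, 0 < p (x, y) → dist p Prod.fst x = dist p Prod.snd y) :
    (∃ (U : Type) (_ : Fintype U) (q : X × Y × U → ℝ), IsAux p q ∧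
        Indep q cU cX ∧ Indep q cU cY ∧
        Hc q cX (fun a => (cY a, cU a)) = 0 ∧
        Hc q cY (fun a => (cX a, cU a)) = 0) ∧
    GPPI p = Hc p Prod.snd Prod.fst := by
  obtain ⟨U, hU, q, haux, hX, hY, hXdet, hYdet⟩ := exists_isAux_indep_determined hp hmarg
  refine ⟨⟨U, hU, q, haux, hX, hY, hXdet, hYdet⟩, IsGreatest.csSup_eq ⟨?_, ?_⟩⟩
  · exact ⟨U, hU, q, haux, hX, hY, by rw [Ic_sub_I2_eq_of_isAux haux hY, hYdet, sub_zero]⟩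
  · rintro r ⟨U', _, q', haux', -, hY', rfl⟩
    rw [Ic_sub_I2_eq_of_isAux haux' hY']
    exact sub_le_self _ (Hc_nonneg haux'.1.1 _ _)

end GW
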